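/- Let l = 7 and let G be a graph with no two intersecting v-paths, with canonical v-path P = x'_1,…,x'_p,v,x_1,…,x_{6−p}. Let C = {y} be a connected component of G_v − V(P) of size one adjacent to both x_1 and x_4 (an x_1/x_4-component). Then every 7-path in G containing y also contains x_4. -/

import Mathlib

variable {V : Type*} [Fintype V] [DecidableEq V]

/-- `L` is the list of vertices of a path in `G` (consecutive vertices adjacent, no repeats). -/
def IsPathL (G : SimpleGraph V) (L : List V) : Prop :=
  L.Chain' G.Adj ∧ L.Nodup

/-- `L` is an `l`-path in `G`: a path on exactly `l` vertices. -/
def IsLPathL (G : SimpleGraph V) (l : ℕ) (L : List V) : Prop :=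
  IsPathL G L ∧ L.length = l

/-- `L` is a `v`-path: an `l`-path containing the vertex `v`. -/
def IsVPathL (G : SimpleGraph V) (l : ℕ) (v : V) (L : List V) : Prop :=
  IsLPathL G l L ∧ v ∈ L

/-- `S` is an `l`-path vertex cover of `G`: `G - S` contains no `l`-path. -/
def IsLPVC (G : SimpleGraph V) (l : ℕ) (S : Finset V) : Prop :=
  ¬ ∃ L, IsLPathL G l L ∧ ∀ x ∈ L, x ∉ S

/-- `X` is a `v`-hitting set: a set of vertices of the connected component of `v`,
not containing `v`, intersecting every `v`-path. -/
def IsVHit (G : SimpleGraph V) (l : ℕ) (v : V) (X : Finset V) : Prop :=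
  v ∉ X ∧ (∀ x ∈ X, G.Reachable v x) ∧
    ∀ L, IsVPathL G l v L → ∃ x ∈ X, x ∈ L

/-- `u` is reachable from `w` by a walk avoiding the set `S`
(i.e. `u` is in the connected component of `w` in `G - S`). -/
def ReachAvoid (G : SimpleGraph V) (S : Set V) (w u : V) : Prop :=
  ∃ q : G.Walk w u, ∀ x ∈ q.support, x ∉ S

/-- Two `v`-paths are intersecting if they have different vertex sets and share
a vertex other than `v`. -/
def IntersectingVP (v : V) (L L' : List V) : Prop :=
  L.toFinset ≠ L'.toFinset ∧ ∃ u, u ≠ v ∧ u ∈ L ∧ u ∈ L'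

/-!
Every neighbour of `y` lies on `P`, so a `v`-path through `y` would meet `P` in a vertex other
than `v` while having a different vertex set. Rerouting `P` through the edge `x₁y` shows that `y`
has no neighbour besides `x₁` and `x₄` (a third neighbour would give a `v`-path through `y` and
`x₁`, found case by case on the prefix length `p ≤ 2`); hence no `v`-path contains `y`. A 7-path
`M` through `y` avoiding `x₄` must then start `y, x₁, …`, and replacing `y` by `v` gives a
`v`-path through `x₁` that misses `x₄`, which intersects `P`.
-/

section

variable {W : Type*} {G : SimpleGraph W} {l : ℕ} {v : W}

lemma isPathL_iff {L : List W} : IsPathL G L ↔ L.IsChain G.Adj ∧ L.Nodup := Iff.rfl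

def NoIntersectingVPaths [DecidableEq W] (G : SimpleGraph W) (l : ℕ) (v : W) : Prop :=
  ∀ L L' : List W, IsVPathL G l v L → IsVPathL G l v L' → ¬ IntersectingVP v L L'

lemma IsPathL.reverse {L : List W} (h : IsPathL G L) : IsPathL G L.reverse :=
  ⟨List.isChain_reverse.mpr (h.1.imp fun _ _ hab => hab.symm), List.nodup_reverse.mpr h.2⟩

lemma IsPathL.replace_head {x y w : W} {T : List W} (h : IsPathL G (y :: x :: T))
    (hw : G.Adj w x) (hwT : w ∉ x :: T) : IsPathL G (w :: x :: T) :=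
  ⟨List.isChain_cons_cons.mpr ⟨hw, (List.isChain_cons_cons.mp h.1).2⟩,
    List.nodup_cons.mpr ⟨hwT, (List.nodup_cons.mp h.2).2⟩⟩

lemma exists_adj_of_mem_of_isChain {L : List W} (hL : L.IsChain G.Adj) (hlen : 2 ≤ L.length) {y : W}
    (hy : y ∈ L) : ∃ z ∈ L, G.Adj y z := by
  obtain ⟨S, T, rfl⟩ := List.append_of_mem hy
  cases T with
  | cons t T => exact ⟨t, by simp, (List.isChain_append_cons_cons.mp hL).2.1⟩
  | nil =>
    obtain rfl | ⟨S, s, rfl⟩ := S.eq_nil_or_concat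
    · simp at hlen
    · rw [List.concat_eq_append, List.append_assoc] at hL
      exact ⟨s, by simp, (List.isChain_append_cons_cons.mp hL).2.1.symm⟩

lemma IsPathL.eq_nil_or_eq_nil {S T : List W} {x y : W} (h : IsPathL G (S ++ y :: T))
    (hx : ∀ z ∈ S ++ y :: T, G.Adj y z → z = x) : S = [] ∨ T = [] := by
  obtain rfl | ⟨S, s, rfl⟩ := S.eq_nil_or_concat
  · exact Or.inl rfl
  cases T with
  | nil => exact Or.inr rfl
  | cons t T =>
    rw [List.concat_eq_append, List.append_assoc] at h
    have hsy := (List.isChain_append_cons_cons.mp h.1).2.1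
    have hyt := (List.isChain_append_cons_cons.mp h.1).2.2
    have hs : s = x := hx s (by simp) hsy.symm
    have ht : t = x := hx t (by simp) (List.isChain_cons_cons.mp hyt).1
    have hnd := h.2
    simp [List.nodup_append, hs, ht] at hnd

lemma IsPathL.exists_cons_cons_perm {M : List W} {x y : W} (hM : IsPathL G M)
    (hlen : 2 ≤ M.length) (hyM : y ∈ M) (hx : ∀ z ∈ M, G.Adj y z → z = x) :
    ∃ T, IsPathL G (y :: x :: T) ∧ (y :: x :: T).Perm M := by
  have of_head : ∀ T, IsPathL G (y :: T) → 1 ≤ T.length → (∀ z ∈ T, G.Adj y z → z = x) →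
      ∃ T', y :: T = y :: x :: T' := by
    rintro (_ | ⟨t, T⟩) hT hT₁ hTx
    · simp at hT₁
    · exact ⟨T, by rw [hTx t (by simp) (List.isChain_cons_cons.mp hT.1).1]⟩
  obtain ⟨S, T, rfl⟩ := List.append_of_mem hyM
  rcases hM.eq_nil_or_eq_nil hx with rfl | rfl
  · obtain ⟨T', hT'⟩ := of_head T hM (by simpa using hlen) fun z hz => hx z (by simp [hz])
    exact ⟨T', hT' ▸ hM, by rw [← hT']; rfl⟩
  · have hrev : (S ++ [y]).reverse = y :: S.reverse := by simp
    have hR := hM.reverse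
    rw [hrev] at hR
    obtain ⟨T', hT'⟩ := of_head S.reverse hR (by simpa using hlen)
      fun z hz => hx z (by simp_all)
    exact ⟨T', hT' ▸ hR, hT' ▸ hrev ▸ List.reverse_perm _⟩

lemma NoIntersectingVPaths.eq_of_mem_of_mem [DecidableEq W] (hno : NoIntersectingVPaths G l v)
    {N P : List W} {y u : W} (hN : IsVPathL G l v N) (hP : IsVPathL G l v P)
    (hyN : y ∈ N) (hyP : y ∉ P) (huN : u ∈ N) (huP : u ∈ P) : u = v := by
  by_contra huv
  refine hno N P hN hP ⟨fun h => hyP ?_, u, huv, huN, huP⟩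
  rw [← List.mem_toFinset, ← h, List.mem_toFinset]
  exact hyN

lemma NoIntersectingVPaths.notMem_of_forall_adj_mem [DecidableEq W]
    (hno : NoIntersectingVPaths G l v) (hl : 2 ≤ l) {P : List W} (hP : IsVPathL G l v P)
    {y : W} (hyP : y ∉ P) (hnb : ∀ z, G.Adj y z → z ∈ P ∧ z ≠ v) {N : List W}
    (hN : IsVPathL G l v N) : y ∉ N := by
  intro hyN
  obtain ⟨z, hzN, hz⟩ := exists_adj_of_mem_of_isChain hN.1.1.1 (hN.1.2 ▸ hl) hyN
  exact (hnb z hz).2 (hno.eq_of_mem_of_mem hN hP hyN hyP hzN (hnb z hz).1)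

lemma exists_vPath_mem_of_adj_prefix_zero {v x₁ b₂ b₃ x₄ b₅ b₆ y z : W}
    (hP : IsPathL G [v, x₁, b₂, b₃, x₄, b₅, b₆]) (hy : y ∉ [v, x₁, b₂, b₃, x₄, b₅, b₆])
    (hx₁ : G.Adj x₁ y) (hz : G.Adj y z) (hzP : z ∈ [v, b₂, b₃, b₅, b₆]) :
    ∃ N, IsVPathL G 7 v N ∧ y ∈ N ∧ x₁ ∈ N := by
  simp only [isPathL_iff, List.isChain_cons_cons, List.nodup_cons, List.mem_cons] at hP hy
  simp only [List.mem_cons, List.not_mem_nil, or_false] at hzP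
  rcases hzP with rfl | rfl | rfl | rfl | rfl <;> [
    use [y, z, x₁, b₂, b₃, x₄, b₅];
    use [v, x₁, y, z, b₃, x₄, b₅];
    use [v, x₁, y, z, x₄, b₅, b₆];
    use [v, x₁, y, z, x₄, b₃, b₂];
    use [v, x₁, y, z, b₅, x₄, b₃]] <;>
  simp_all [IsVPathL, IsLPathL, isPathL_iff, G.adj_comm, eq_comm]

lemma exists_vPath_mem_of_adj_prefix_one {a₁ v x₁ b₂ b₃ x₄ b₅ y z : W}
    (hP : IsPathL G [a₁, v, x₁, b₂, b₃, x₄, b₅]) (hy : y ∉ [a₁, v, x₁, b₂, b₃, x₄, b₅])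
    (hx₁ : G.Adj x₁ y) (hz : G.Adj y z) (hzP : z ∈ [a₁, v, b₂, b₃, b₅]) :
    ∃ N, IsVPathL G 7 v N ∧ y ∈ N ∧ x₁ ∈ N := by
  simp only [isPathL_iff, List.isChain_cons_cons, List.nodup_cons, List.mem_cons] at hP hy
  simp only [List.mem_cons, List.not_mem_nil, or_false] at hzP
  rcases hzP with rfl | rfl | rfl | rfl | rfl <;> [
    use [y, z, v, x₁, b₂, b₃, x₄];
    use [y, z, x₁, b₂, b₃, x₄, b₅];
    use [a₁, v, x₁, y, z, b₃, x₄];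
    use [a₁, v, x₁, y, z, x₄, b₅];
    use [a₁, v, x₁, y, z, x₄, b₃]] <;>
  simp_all [IsVPathL, IsLPathL, isPathL_iff, G.adj_comm, eq_comm]

lemma exists_vPath_mem_of_adj_prefix_two {a₁ a₂ v x₁ b₂ b₃ x₄ y z : W}
    (hP : IsPathL G [a₁, a₂, v, x₁, b₂, b₃, x₄]) (hy : y ∉ [a₁, a₂, v, x₁, b₂, b₃, x₄])
    (hx₁ : G.Adj x₁ y) (hz : G.Adj y z) (hzP : z ∈ [a₁, a₂, v, b₂, b₃]) :
    ∃ N, IsVPathL G 7 v N ∧ y ∈ N ∧ x₁ ∈ N := by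
  simp only [isPathL_iff, List.isChain_cons_cons, List.nodup_cons, List.mem_cons] at hP hy
  simp only [List.mem_cons, List.not_mem_nil, or_false] at hzP
  rcases hzP with rfl | rfl | rfl | rfl | rfl <;> [
    use [y, z, a₂, v, x₁, b₂, b₃];
    use [y, z, v, x₁, b₂, b₃, x₄];
    use [a₁, a₂, z, y, x₁, b₂, b₃];
    use [a₁, a₂, v, x₁, y, z, b₃];
    use [a₁, a₂, v, x₁, y, z, b₂]] <;>
  simp_all [IsVPathL, IsLPathL, isPathL_iff, G.adj_comm, eq_comm]

lemma NoIntersectingVPaths.eq_or_eq_of_adj [DecidableEq W] (hno : NoIntersectingVPaths G 7 v)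
    {A B : List W} {x₁ x₄ y z : W}
    (hP : IsLPathL G 7 (A ++ v :: B)) (hx₁B : B[0]? = some x₁) (hx₄B : B[3]? = some x₄)
    (hy : y ∉ A ++ v :: B) (hx₁y : G.Adj x₁ y) (hyP : ∀ z, G.Adj y z → z ∈ A ++ v :: B)
    (hz : G.Adj y z) : z = x₁ ∨ z = x₄ := by
  by_contra! hzx
  have hx₁P : x₁ ∈ A ++ v :: B := by simp [List.mem_of_getElem? hx₁B]
  have hx₁v : x₁ ≠ v := by
    rintro rfl
    exact (List.nodup_cons.mp hP.1.2.of_append_right).1 (List.mem_of_getElem? hx₁B)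
  obtain ⟨N, hN, hyN, hx₁N⟩ : ∃ N, IsVPathL G 7 v N ∧ y ∈ N ∧ x₁ ∈ N := by
    have hlen := hP.2
    have hzP := hyP z hz
    -- `x₄ = B[3]` forces `B.length ≥ 4`, so `A.length ≤ 2`.
    rcases A with _ | ⟨a₁, _ | ⟨a₂, _ | ⟨a₃, A⟩⟩⟩ <;>
      rcases B with _ | ⟨b₁, _ | ⟨b₂, _ | ⟨b₃, _ | ⟨b₄, _ | ⟨b₅, _ | ⟨b₆, _ | ⟨b₇, B⟩⟩⟩⟩⟩⟩⟩ <;>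
      simp at hlen hx₁B hx₄B <;> try omega
    all_goals subst hx₁B hx₄B
    · exact exists_vPath_mem_of_adj_prefix_zero hP.1 hy hx₁y hz (by simp_all)
    · exact exists_vPath_mem_of_adj_prefix_one hP.1 hy hx₁y hz (by simp_all)
    · exact exists_vPath_mem_of_adj_prefix_two hP.1 hy hx₁y hz (by simp_all)
  exact hx₁v (hno.eq_of_mem_of_mem hN ⟨hP, by simp⟩ hyN hy hx₁N hx₁P)

end

theorem stmt_9_general (G : SimpleGraph V) (v : V) (A B : List V) (x₁ x₄ y : V)
    (hno : ∀ L L' : List V, IsVPathL G 7 v L → IsVPathL G 7 v L' →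
      ¬ IntersectingVP v L L')
    (hP : IsLPathL G 7 (A ++ v :: B))
    (hx1 : B[0]? = some x₁) (hx4 : B[3]? = some x₄)
    (hy : y ∉ A ++ v :: B)
    (hadj1 : G.Adj x₁ y)
    (hsingle : ∀ z : V, G.Adj y z → z ∈ A ++ v :: B) :
    ∀ M : List V, IsLPathL G 7 M → y ∈ M → x₄ ∈ M := by
  intro M hM hyM
  by_contra hx₄M
  replace hno : NoIntersectingVPaths G 7 v := hno
  have hnb : ∀ z, G.Adj y z → z = x₁ ∨ z = x₄ := fun z =>
    hno.eq_or_eq_of_adj hP hx1 hx4 hy hadj1 hsingle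
  have hx₄B : x₄ ∈ B := List.mem_of_getElem? hx4
  obtain ⟨B, rfl⟩ : ∃ B', B = x₁ :: B' := ⟨B.tail, by cases B <;> simp_all⟩
  have hPv : IsVPathL G 7 v (A ++ v :: x₁ :: B) := ⟨hP, by simp⟩
  have hvx₁ : G.Adj v x₁ := (List.isChain_append_cons_cons.mp hP.1.1).2.1
  have hvB : v ∉ x₁ :: B := (List.nodup_cons.mp hP.1.2.of_append_right).1
  have hvM : v ∉ M := by
    refine fun hvM => hno.notMem_of_forall_adj_mem (by norm_num) hPv hy (fun z hz => ?_)
      ⟨hM, hvM⟩ hyM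
    have hzB : z ∈ x₁ :: B := by rcases hnb z hz with rfl | rfl <;> simp [hx₄B]
    exact ⟨hsingle z hz, fun hzv => hvB (hzv ▸ hzB)⟩
  obtain ⟨T, hT, hTM⟩ := hM.1.exists_cons_cons_perm (by rw [hM.2]; norm_num) hyM
    fun z hzM hz => (hnb z hz).resolve_right (by rintro rfl; exact hx₄M hzM)
  have hN : IsVPathL G 7 v (v :: x₁ :: T) :=
    ⟨⟨hT.replace_head hvx₁ fun h => hvM (hTM.subset (List.mem_cons_of_mem _ h)),
      by simpa using hTM.length_eq.trans hM.2⟩, by simp⟩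
  have hx₄N : x₄ ∉ v :: x₁ :: T := by
    rintro (_ | ⟨_, hx₄T⟩)
    · exact hvB hx₄B
    · exact hx₄M (hTM.subset (List.mem_cons_of_mem _ hx₄T))
  have hx₁v := hno.eq_of_mem_of_mem (u := x₁) hPv hN (by simp [hx₄B]) hx₄N (by simp) (by simp)
  exact hvB (by simp [← hx₁v])

theorem stmt_9 (G : SimpleGraph V) (v : V) (A B : List V) (x₁ x₄ y : V)
    (hno : ∀ L L' : List V, IsVPathL G 7 v L → IsVPathL G 7 v L' →
      ¬ IntersectingVP v L L')
    (hP : IsLPathL G 7 (A ++ v :: B))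
    (hpre : A.length ≤ 3)
    (hmin : ∀ A' B' : List V, IsLPathL G 7 (A' ++ v :: B') →
      (A' ++ v :: B').toFinset = (A ++ v :: B).toFinset → A.length ≤ A'.length)
    (hx1 : B[0]? = some x₁) (hx4 : B[3]? = some x₄)
    (hy : y ∉ A ++ v :: B) (hyv : G.Reachable v y)
    (hadj1 : G.Adj x₁ y) (hadj4 : G.Adj x₄ y)
    (hsingle : ∀ z : V, G.Adj y z → z ∈ A ++ v :: B) :
    ∀ M : List V, IsLPathL G 7 M → y ∈ M → x₄ ∈ M :=
  stmt_9_general G v A B x₁ x₄ y hno hP hx1 hx4 hy hadj1 hsingle
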